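/- For an acyclic CNF formula F, the number of minimal models of F equals the number of models of F ∧ Forced(F); equivalently, a model τ of F is minimal if and only if τ satisfies Forced(F). -/

import Mathlib

abbrev Clause (V : Type*) := List (V × Bool)
abbrev CNF (V : Type*) := List (Clause V)

/-- An assignment satisfies a literal `(v, b)` if it assigns value `b` to `v`. -/
def litSat {V : Type*} (τ : V → Bool) (ℓ : V × Bool) : Prop := τ ℓ.1 = ℓ.2

/-- An assignment satisfies a clause if it satisfies some literal of it. -/
def clauseSat {V : Type*} (τ : V → Bool) (C : Clause V) : Prop := ∃ ℓ ∈ C, litSat τ ℓ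

/-- An assignment is a model of a CNF formula if it satisfies every clause. -/
def sat {V : Type*} (τ : V → Bool) (F : CNF V) : Prop := ∀ C ∈ F, clauseSat τ C

/-- Pointwise order on assignments, with `false < true`. -/
def leA {V : Type*} (τ₁ τ₂ : V → Bool) : Prop := ∀ x, τ₁ x ≤ τ₂ x

/-- Strictly smaller assignment. -/
def ltA {V : Type*} (τ₁ τ₂ : V → Bool) : Prop := leA τ₁ τ₂ ∧ τ₁ ≠ τ₂

/-- A minimal model: a model with no strictly smaller model. -/
def MinModel {V : Type*} (F : CNF V) (τ : V → Bool) : Prop :=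
  sat τ F ∧ ∀ τ₂, sat τ₂ F → ¬ ltA τ₂ τ

/-- Clause `C` forces variable `x` under `τ`: `x` occurs positively in `C` and all
other literals of `C` are falsified by `τ`. -/
def forces {V : Type*} (C : Clause V) (x : V) (τ : V → Bool) : Prop :=
  (x, true) ∈ C ∧ ∀ ℓ ∈ C, ℓ ≠ (x, true) → ¬ litSat τ ℓ

/-- `τ` satisfies the forced formula `Forced(F) = ⋀_x (x → ⋁_{C ∈ Forced(F,x)} ¬(C \ {x}))`:
for every variable assigned true there is a clause containing it positively whose
remaining literals are all falsified. -/
def satForced {V : Type*} (F : CNF V) (τ : V → Bool) : Prop :=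
  ∀ x, τ x = true → ∃ C ∈ F, (x, true) ∈ C ∧ ∀ ℓ ∈ C, ℓ ≠ (x, true) → ¬ litSat τ ℓ

/-- Arc of the dependency graph: from `a` to `b` when some clause contains `¬a` and `b`. -/
def dep {V : Type*} (F : CNF V) (a b : V) : Prop :=
  ∃ C ∈ F, (a, false) ∈ C ∧ (b, true) ∈ C

/-- A CNF formula is acyclic if its dependency graph has no directed cycle. -/
def Acyclic {V : Type*} (F : CNF V) : Prop :=
  ∀ a, ¬ Relation.TransGen (dep F) a a

/-
Minimal models satisfy Forced(F) without any acyclicity: if no clause forces a true variable x,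
switching x off keeps every clause satisfied and yields a strictly smaller model.
Conversely, let τ ⊨ F ∧ Forced(F) and σ < τ be a model. The variables true in τ but false in σ
form a nonempty set; by acyclicity pick one, x, with no dependency-graph predecessor in the set.
A clause forcing x under τ is satisfied by σ through a literal that τ falsifies; since σ ≤ τ
that literal is some ¬y with y true in τ and false in σ, and y → x is an arc of G(F).
-/

section

variable {V : Type*}

open Function

theorem litSat_update_false [DecidableEq V] {τ : V → Bool} {x : V} {ℓ : V × Bool}
    (hℓ : litSat τ ℓ) (hne : ℓ ≠ (x, true)) : litSat (update τ x false) ℓ := by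
  obtain ⟨y, b⟩ := ℓ
  by_cases hy : y = x
  · subst hy
    cases b
    · simp [litSat]
    · exact absurd rfl hne
  · simpa [litSat, hy] using hℓ

theorem sat_update_false [DecidableEq V] {F : CNF V} {τ : V → Bool} (hτ : sat τ F) {x : V}
    (hx : ∀ C ∈ F, ¬ forces C x τ) : sat (update τ x false) F := by
  intro C hC
  obtain ⟨ℓ, hℓC, hℓ⟩ := hτ C hC
  by_cases hℓx : ℓ = (x, true)
  · subst hℓx
    obtain ⟨ℓ', hℓ'C, hℓ'x, hℓ'⟩ : ∃ ℓ' ∈ C, ℓ' ≠ (x, true) ∧ litSat τ ℓ' := by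
      by_contra! h
      exact hx C hC ⟨hℓC, h⟩
    exact ⟨ℓ', hℓ'C, litSat_update_false hℓ' hℓ'x⟩
  · exact ⟨ℓ, hℓC, litSat_update_false hℓ hℓx⟩

theorem ltA_update_false [DecidableEq V] {τ : V → Bool} {x : V} (hx : τ x = true) :
    ltA (update τ x false) τ := by
  refine ⟨fun y => ?_, fun h => by simpa [hx] using congrFun h x⟩
  by_cases hy : y = x <;> simp [hy]

theorem satForced_of_minModel {F : CNF V} {τ : V → Bool} (hτ : MinModel F τ) :
    satForced F τ := by
  classical
  intro x hx
  by_contra hforced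
  exact hτ.2 _ (sat_update_false hτ.1 fun C hC hCx => hforced ⟨C, hC, hCx⟩) (ltA_update_false hx)

theorem Acyclic.wellFounded_dep [Finite V] {F : CNF V} (hA : Acyclic F) :
    WellFounded (dep F) :=
  have : IsTrans V (Relation.TransGen (dep F)) := ⟨fun _ _ _ => Relation.TransGen.trans⟩
  have : Std.Irrefl (Relation.TransGen (dep F)) := ⟨hA⟩
  (Finite.wellFounded_of_trans_of_irrefl _).mono fun _ _ => Relation.TransGen.single

theorem exists_eq_false_eq_true_of_ltA {σ τ : V → Bool} (h : ltA σ τ) :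
    ∃ x, σ x = false ∧ τ x = true := by
  by_contra! hne
  refine h.2 (funext fun x => ?_)
  have hle := h.1 x
  have hx := hne x
  revert hle hx
  cases σ x <;> cases τ x <;> simp

theorem eq_false_of_litSat_of_not_litSat {σ τ : V → Bool} (hle : leA σ τ) {ℓ : V × Bool}
    (hσ : litSat σ ℓ) (hτ : ¬ litSat τ ℓ) : ℓ.2 = false ∧ σ ℓ.1 = false ∧ τ ℓ.1 = true := by
  have := hle ℓ.1
  unfold litSat at hσ hτ
  revert this hσ hτ
  cases σ ℓ.1 <;> cases τ ℓ.1 <;> cases ℓ.2 <;> simp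

theorem minModel_of_satForced [Finite V] {F : CNF V} (hA : Acyclic F) {τ : V → Bool}
    (hτ : sat τ F) (hF : satForced F τ) : MinModel F τ := by
  refine ⟨hτ, fun σ hσ hlt => ?_⟩
  obtain ⟨x, ⟨hxσ, hxτ⟩, hmin⟩ := hA.wellFounded_dep.has_min {x | σ x = false ∧ τ x = true}
    (exists_eq_false_eq_true_of_ltA hlt)
  obtain ⟨C, hC, hxC, hforce⟩ := hF x hxτ
  obtain ⟨ℓ, hℓC, hℓσ⟩ := hσ C hC
  have hℓx : ℓ ≠ (x, true) := by
    rintro rfl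
    simp [litSat, hxσ] at hℓσ
  obtain ⟨hneg, hyσ, hyτ⟩ := eq_false_of_litSat_of_not_litSat hlt.1 hℓσ (hforce ℓ hℓC hℓx)
  exact hmin ℓ.1 ⟨hyσ, hyτ⟩ ⟨C, hC, by rwa [← hneg], hxC⟩

end

/-- for acyclic `F`, the number of minimal models equals the number of
models of `F ∧ Forced(F)`; equivalently a model is minimal iff it satisfies
`Forced(F)`. -/
theorem stmt6 {V : Type*} [Fintype V] (F : CNF V) (hA : Acyclic F) :
    Nat.card {τ : V → Bool // MinModel F τ} =
      Nat.card {τ : V → Bool // sat τ F ∧ satForced F τ} ∧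
    ∀ τ : V → Bool, sat τ F → (MinModel F τ ↔ satForced F τ) := by
  have hiff (τ : V → Bool) (hτ : sat τ F) : MinModel F τ ↔ satForced F τ :=
    ⟨satForced_of_minModel, minModel_of_satForced hA hτ⟩
  refine ⟨Nat.card_congr (Equiv.subtypeEquivRight fun τ => ?_), hiff⟩
  exact ⟨fun h => ⟨h.1, satForced_of_minModel h⟩, fun h => (hiff τ h.1).2 h.2⟩
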